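/- Let (S, ν) be a measure space with ν a probability measure (the state distribution p(s)), let μ be a σ-finite measure on a measurable space A, let Q : S × A → ℝ be measurable, and let α > 0 be such that Z(s) := ∫ exp(Q(s,a)/α) dμ(a) ∈ (0, ∞) for ν-almost every s. Define the Boltzmann policy family g(a|s) := exp(Q(s,a)/α)/Z(s). Let {π(·|s)}_{s∈S} be a measurable family of probability densities with respect to μ such that, for ν-almost every s, ∫ Q(s,a) π(a|s) dμ(a) and H(π(·|s)) := −∫ π(a|s) log π(a|s) dμ(a) are well-defined and ν-integrable, and suppose the global expected entropy constraint ∫ H(π(·|s)) dν(s) = ∫ H(g(·|s)) dν(s) holds. Then the global expected action value satisfies ∫∫ Q(s,a) π(a|s) dμ(a) dν(s) ≤ ∫∫ Q(s,a) g(a|s) dμ(a) dν(s). That is, under a global expected entropy constraint, the family of Boltzmann policies with a common temperature α maximizes the global expected action value. -/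

import Mathlib

/-!
The Boltzmann density `g = exp (q / α) / Z` has the affine logarithm `log g = q / α - log Z`, so for
any probability density `p` Gibbs' inequality `∫ p log g ≤ ∫ p log p` reads
`∫ q p + α H(p) ≤ α log Z`, with equality at `p = g`. This holds state by state; integrating over
the states, the expected entropies cancel by the constraint.
-/

open MeasureTheory Real

lemma Real.mul_log_sub_mul_log_le_sub {x y : ℝ} (hx : 0 ≤ x) (hy : 0 < y) :
    x * log y - x * log x ≤ y - x := by
  rcases hx.eq_or_lt with rfl | hx
  · simpa using hy.le
  calc x * log y - x * log x = x * log (y / x) := by rw [log_div hy.ne' hx.ne', mul_sub]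
    _ ≤ x * (y / x - 1) := mul_le_mul_of_nonneg_left (log_le_sub_one_of_pos (div_pos hy hx)) hx.le
    _ = y - x := by field_simp

lemma mul_log_exp_div_eq {A : Type*} {q p : A → ℝ} {α Z : ℝ} (hZ : 0 < Z) :
    (fun a => p a * log (exp (q a / α) / Z)) = fun a => α⁻¹ * (q a * p a) - log Z * p a := by
  funext a
  rw [log_div (exp_ne_zero _) hZ.ne', log_exp]
  ring

section Entropy

variable {A : Type*} [MeasurableSpace A] {μ : Measure A}

variable (μ) in
noncomputable def entropy (p : A → ℝ) : ℝ := -∫ a, p a * log (p a) ∂μ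

theorem integral_mul_log_le_integral_mul_log {p g : A → ℝ} (hp₀ : ∀ᵐ a ∂μ, 0 ≤ p a)
    (hg₀ : ∀ᵐ a ∂μ, 0 < g a) (hp : Integrable p μ) (hg : Integrable g μ)
    (hpg : ∫ a, p a ∂μ = ∫ a, g a ∂μ) (hplogp : Integrable (fun a => p a * log (p a)) μ)
    (hplogg : Integrable (fun a => p a * log (g a)) μ) :
    ∫ a, p a * log (g a) ∂μ ≤ ∫ a, p a * log (p a) ∂μ := by
  have h : ∫ a, (p a * log (g a) - p a * log (p a)) ∂μ ≤ ∫ a, (g a - p a) ∂μ :=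
    integral_mono_ae (hplogg.sub hplogp) (hg.sub hp) <| by
      filter_upwards [hp₀, hg₀] with a hpa hga using mul_log_sub_mul_log_le_sub hpa hga
  rw [integral_sub hplogg hplogp, integral_sub hg hp, hpg, sub_self] at h
  linarith

variable {q : A → ℝ} {α Z : ℝ}

lemma integrable_mul_log_exp_div {p : A → ℝ} (hZ : 0 < Z) (hp : Integrable p μ)
    (hqp : Integrable (fun a => q a * p a) μ) :
    Integrable (fun a => p a * log (exp (q a / α) / Z)) μ := by
  rw [mul_log_exp_div_eq hZ]
  exact (hqp.const_mul _).sub (hp.const_mul _)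

lemma integral_mul_log_exp_div {p : A → ℝ} (hZ : 0 < Z) (hp : Integrable p μ)
    (hp₁ : ∫ a, p a ∂μ = 1) (hqp : Integrable (fun a => q a * p a) μ) :
    ∫ a, p a * log (exp (q a / α) / Z) ∂μ = α⁻¹ * ∫ a, q a * p a ∂μ - log Z := by
  rw [mul_log_exp_div_eq hZ, integral_sub (hqp.const_mul _) (hp.const_mul _), integral_const_mul,
    integral_const_mul, hp₁, mul_one]

lemma integral_exp_div_eq_one (hZ : Z = ∫ a, exp (q a / α) ∂μ) (hZpos : 0 < Z) :
    ∫ a, exp (q a / α) / Z ∂μ = 1 := by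
  rw [integral_div, ← hZ, div_self hZpos.ne']

theorem integral_mul_add_mul_entropy_le_mul_log (hα : 0 < α)
    (hZint : Integrable (fun a => exp (q a / α)) μ) (hZ : Z = ∫ a, exp (q a / α) ∂μ)
    (hZpos : 0 < Z) {p : A → ℝ} (hp₀ : ∀ᵐ a ∂μ, 0 ≤ p a) (hp : Integrable p μ)
    (hp₁ : ∫ a, p a ∂μ = 1) (hqp : Integrable (fun a => q a * p a) μ)
    (hplogp : Integrable (fun a => p a * log (p a)) μ) :
    ∫ a, q a * p a ∂μ + α * entropy μ p ≤ α * log Z := by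
  have hgibbs := integral_mul_log_le_integral_mul_log hp₀
    (ae_of_all _ fun a => div_pos (exp_pos (q a / α)) hZpos) hp (hZint.div_const Z)
    (by rw [hp₁, integral_exp_div_eq_one hZ hZpos]) hplogp
    (integrable_mul_log_exp_div hZpos hp hqp)
  rw [integral_mul_log_exp_div hZpos hp hp₁ hqp] at hgibbs
  have := mul_le_mul_of_nonneg_left hgibbs hα.le
  rw [mul_sub, ← mul_assoc, mul_inv_cancel₀ hα.ne', one_mul] at this
  rw [entropy]
  linarith

theorem integral_mul_add_mul_entropy_exp_div (hα : α ≠ 0)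
    (hZint : Integrable (fun a => exp (q a / α)) μ) (hZ : Z = ∫ a, exp (q a / α) ∂μ)
    (hZpos : 0 < Z) (hqg : Integrable (fun a => q a * (exp (q a / α) / Z)) μ) :
    ∫ a, q a * (exp (q a / α) / Z) ∂μ + α * entropy μ (fun a => exp (q a / α) / Z)
      = α * log Z := by
  rw [entropy, integral_mul_log_exp_div hZpos (hZint.div_const Z)
    (integral_exp_div_eq_one hZ hZpos) hqg, mul_neg, mul_sub, ← mul_assoc,
    mul_inv_cancel₀ hα, one_mul]
  ring

end Entropy

theorem boltzmann_family_maximizes_global_expected_value_general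
    {S A : Type*} [MeasurableSpace S] [MeasurableSpace A]
    (ν : Measure S)
    (μ : Measure A)
    (Q : S → A → ℝ)
    (α : ℝ) (hα : 0 < α)
    (Z : S → ℝ)
    (hZint : ∀ᵐ s ∂ν, Integrable (fun a => Real.exp (Q s a / α)) μ)
    (hZdef : ∀ᵐ s ∂ν, Z s = ∫ a, Real.exp (Q s a / α) ∂μ)
    (hZpos : ∀ᵐ s ∂ν, 0 < Z s)
    (g : S → A → ℝ) (hgdef : ∀ s a, g s a = Real.exp (Q s a / α) / Z s)
    (p : S → A → ℝ)
    (hpnn : ∀ s a, 0 ≤ p s a)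
    (hpdens : ∀ᵐ s ∂ν, Integrable (p s) μ ∧ ∫ a, p s a ∂μ = 1)
    (hQp : ∀ᵐ s ∂ν, Integrable (fun a => Q s a * p s a) μ)
    (hEntp : ∀ᵐ s ∂ν, Integrable (fun a => p s a * Real.log (p s a)) μ)
    (hQg : ∀ᵐ s ∂ν, Integrable (fun a => Q s a * g s a) μ)
    (hQpν : Integrable (fun s => ∫ a, Q s a * p s a ∂μ) ν)
    (hEntpν : Integrable (fun s => -∫ a, p s a * Real.log (p s a) ∂μ) ν)
    (hQgν : Integrable (fun s => ∫ a, Q s a * g s a ∂μ) ν)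
    (hEntgν : Integrable (fun s => -∫ a, g s a * Real.log (g s a) ∂μ) ν)
    (hent_constraint :
      ∫ s, (-∫ a, p s a * Real.log (p s a) ∂μ) ∂ν
        = ∫ s, (-∫ a, g s a * Real.log (g s a) ∂μ) ∂ν) :
    ∫ s, (∫ a, Q s a * p s a ∂μ) ∂ν ≤ ∫ s, (∫ a, Q s a * g s a ∂μ) ∂ν := by
  have hstate : ∀ᵐ s ∂ν, ∫ a, Q s a * p s a ∂μ + α * entropy μ (p s)
      ≤ ∫ a, Q s a * g s a ∂μ + α * entropy μ (g s) := by
    filter_upwards [hZint, hZdef, hZpos, hpdens, hQp, hEntp, hQg]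
      with s hZint hZdef hZpos ⟨hp, hp₁⟩ hQp hEntp hQg
    rw [show g s = fun a => exp (Q s a / α) / Z s from funext (hgdef s)] at hQg ⊢
    exact (integral_mul_add_mul_entropy_le_mul_log hα hZint hZdef hZpos (ae_of_all _ (hpnn s))
      hp hp₁ hQp hEntp).trans_eq
      (integral_mul_add_mul_entropy_exp_div hα.ne' hZint hZdef hZpos hQg).symm
  have hint : ∫ s, (∫ a, Q s a * p s a ∂μ + α * entropy μ (p s)) ∂ν
      ≤ ∫ s, (∫ a, Q s a * g s a ∂μ + α * entropy μ (g s)) ∂ν :=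
    integral_mono_ae (hQpν.add (hEntpν.const_mul α)) (hQgν.add (hEntgν.const_mul α)) hstate
  unfold entropy at hint
  rw [integral_add hQpν (hEntpν.const_mul α), integral_add hQgν (hEntgν.const_mul α),
    integral_const_mul, integral_const_mul, hent_constraint] at hint
  linarith

/-- Under a global expected entropy constraint (w.r.t. a state distribution `ν`),
the family of Boltzmann policies `g (a|s) = exp (Q s a / α) / Z s` with a common
temperature `α` maximizes the global expected action value
`∫∫ Q s a · p (a|s) dμ(a) dν(s)`. -/
theorem boltzmann_family_maximizes_global_expected_value
    {S A : Type*} [MeasurableSpace S] [MeasurableSpace A]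
    (ν : Measure S) [IsProbabilityMeasure ν]
    (μ : Measure A) [SigmaFinite μ]
    (Q : S → A → ℝ) (hQ : Measurable (Function.uncurry Q))
    (α : ℝ) (hα : 0 < α)
    (Z : S → ℝ)
    (hZint : ∀ᵐ s ∂ν, Integrable (fun a => Real.exp (Q s a / α)) μ)
    (hZdef : ∀ᵐ s ∂ν, Z s = ∫ a, Real.exp (Q s a / α) ∂μ)
    (hZpos : ∀ᵐ s ∂ν, 0 < Z s)
    (g : S → A → ℝ) (hgdef : ∀ s a, g s a = Real.exp (Q s a / α) / Z s)
    (p : S → A → ℝ) (hpmeas : Measurable (Function.uncurry p))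
    (hpnn : ∀ s a, 0 ≤ p s a)
    (hpdens : ∀ᵐ s ∂ν, Integrable (p s) μ ∧ ∫ a, p s a ∂μ = 1)
    (hQp : ∀ᵐ s ∂ν, Integrable (fun a => Q s a * p s a) μ)
    (hEntp : ∀ᵐ s ∂ν, Integrable (fun a => p s a * Real.log (p s a)) μ)
    (hQg : ∀ᵐ s ∂ν, Integrable (fun a => Q s a * g s a) μ)
    (hEntg : ∀ᵐ s ∂ν, Integrable (fun a => g s a * Real.log (g s a)) μ)
    (hQpν : Integrable (fun s => ∫ a, Q s a * p s a ∂μ) ν)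
    (hEntpν : Integrable (fun s => -∫ a, p s a * Real.log (p s a) ∂μ) ν)
    (hQgν : Integrable (fun s => ∫ a, Q s a * g s a ∂μ) ν)
    (hEntgν : Integrable (fun s => -∫ a, g s a * Real.log (g s a) ∂μ) ν)
    (hent_constraint :
      ∫ s, (-∫ a, p s a * Real.log (p s a) ∂μ) ∂ν
        = ∫ s, (-∫ a, g s a * Real.log (g s a) ∂μ) ∂ν) :
    ∫ s, (∫ a, Q s a * p s a ∂μ) ∂ν ≤ ∫ s, (∫ a, Q s a * g s a ∂μ) ∂ν :=
  boltzmann_family_maximizes_global_expected_value_general ν μ Q α hα Z hZint hZdef hZpos g hgdef p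
    hpnn hpdens hQp hEntp hQg hQpν hEntpν hQgν hEntgν hent_constraint
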